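/- arXiv:2312.04039 — 2 statements merged into one kernel-verified Lean document; each statement's English description precedes it below -/
import Mathlib

section
/- Let n ≥ 5 be odd, let V = {0,1,…,n−1} with the natural order, let Q be a quasi-pairing of V (so ∪Q = V), and set T := Inv(underline(n), Q). Then T is indecomposable if and only if all of the following hold: (1) Q is irreducible; (2) v_Q^+ ≥ v_Q^- + 2; (3) for every v, if both {v, v+2} ∈ Q and {v+1, v+3} ∈ Q, then v̂_Q ∈ {v, v+3}; (4) for every v, if {v, v+1} ∈ Q, then v̂_Q ∈ {v, v+1} ∖ {0, n−1}. -/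
open Set

/-- The arc relation of the tournament `Inv(underline(V), P)` obtained from the
transitive tournament on a linearly ordered type by reversing the arcs `(x,y)`
with `{x,y} ∈ P`. -/
def InvArc {α : Type*} [LinearOrder α] (P : Set (Set α)) (x y : α) : Prop :=
  (x < y ∧ ({x, y} : Set α) ∉ P) ∨ (y < x ∧ ({x, y} : Set α) ∈ P)

/-- `M` is a module of the subtournament of `Inv(·, P)` induced on the vertex set `W`. -/
def IsModuleOn {α : Type*} [LinearOrder α] (P : Set (Set α)) (W M : Set α) : Prop :=
  M ⊆ W ∧ ∀ v ∈ W, v ∉ M →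
    (∀ x ∈ M, InvArc P v x) ∨ (∀ x ∈ M, InvArc P x v)

/-- A subset of the vertex set `W` is trivial if it is empty, a singleton, or all of `W`. -/
def IsTrivialSubset {α : Type*} (W M : Set α) : Prop :=
  M = ∅ ∨ (∃ a, M = {a}) ∨ M = W

/-- A nontrivial module of the tournament `Inv(·, P)` induced on `W`. -/
def IsNontrivialModuleOn {α : Type*} [LinearOrder α] (P : Set (Set α)) (W M : Set α) : Prop :=
  IsModuleOn P W M ∧ ¬ IsTrivialSubset W M

/-- The tournament `Inv(·, P)` induced on `W` is indecomposable: all its modules are trivial. -/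
def IndecomposableOn {α : Type*} [LinearOrder α] (P : Set (Set α)) (W : Set α) : Prop :=
  ∀ M : Set α, IsModuleOn P W M → IsTrivialSubset W M

/-- The tournament `Inv(·, P)` induced on `W` is decomposable: it has a nontrivial module. -/
def DecomposableOn {α : Type*} [LinearOrder α] (P : Set (Set α)) (W : Set α) : Prop :=
  ∃ M : Set α, IsNontrivialModuleOn P W M

/-- A co-module of the tournament `Inv(·, P)` on `W`: a subset `M` of `W` such that
`M` or `W ∖ M` is a nontrivial module. -/
def IsCoModuleOn {α : Type*} [LinearOrder α] (P : Set (Set α)) (W M : Set α) : Prop :=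
  M ⊆ W ∧ (IsNontrivialModuleOn P W M ∨ IsNontrivialModuleOn P W (W \ M))

/-- `mc(underline(W))`: the family of minimal co-modules of the transitive tournament on `W`
(a minimal co-module contains no other co-module). -/
def mcOn {α : Type*} [LinearOrder α] (W : Set α) : Set (Set α) :=
  {M | IsCoModuleOn (∅ : Set (Set α)) W M ∧
    ∀ C : Set α, IsCoModuleOn (∅ : Set (Set α)) W C → C ⊆ M → C = M}

/-- `S` is a transversal of the family `F`: it meets every member of `F`. -/
def TransversalOf {α : Type*} (S : Set α) (F : Set (Set α)) : Prop :=
  ∀ C ∈ F, (S ∩ C).Nonempty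

/-- A partial pairing of `V`: a set of pairwise disjoint 2-element subsets of `V`. -/
def IsPartialPairingOn {α : Type*} (V : Set α) (P : Set (Set α)) : Prop :=
  (∀ B ∈ P, B ⊆ V ∧ B.ncard = 2) ∧
  ∀ B ∈ P, ∀ C ∈ P, B ≠ C → Disjoint B C

/-- `I` is an interval of the totally ordered set `X`: every element of `X ∖ I` is greater
than all elements of `I` or smaller than all of them. -/
def IsIntervalOf {α : Type*} [LinearOrder α] (X I : Set α) : Prop :=
  I ⊆ X ∧ ∀ v ∈ X \ I, (∀ i ∈ I, v < i) ∨ (∀ i ∈ I, i < v)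

/-- A nontrivial interval of `X`. -/
def IsNontrivialIntervalOf {α : Type*} [LinearOrder α] (X I : Set α) : Prop :=
  IsIntervalOf X I ∧ ¬ IsTrivialSubset X I

/-- A family of blocks `P` on the totally ordered set `X` is irreducible if no nontrivial
interval of `X` is a union of blocks of `P`. -/
def IrreducibleOn {α : Type*} [LinearOrder α] (X : Set α) (P : Set (Set α)) : Prop :=
  ∀ R ⊆ P, ¬ IsNontrivialIntervalOf X (⋃₀ R)

/-- A partial quasi-pairing of `V`: a set `Q` of `m+1` two-element subsets of `V` (`m ≥ 1`)
whose union has size `2m+1`. -/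
def IsPartialQuasiPairingOn {α : Type*} (V : Set α) (Q : Set (Set α)) : Prop :=
  (∀ B ∈ Q, B ⊆ V ∧ B.ncard = 2) ∧
  ∃ m : ℕ, 1 ≤ m ∧ (⋃₀ Q).ncard = 2 * m + 1 ∧ Q.ncard = m + 1

/-- The distinguished data of a quasi-pairing `Q`: `vh = v̂_Q` is the element lying in the two
blocks `{vh, vm}` and `{vh, vp}` of `Q`, with `vm = v_Q^- < v_Q^+ = vp`. -/
def QPData {α : Type*} [LinearOrder α] (Q : Set (Set α)) (vh vm vp : α) : Prop :=
  ({vh, vm} : Set α) ∈ Q ∧ ({vh, vp} : Set α) ∈ Q ∧ vm < vp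

/-- `Q_part`: the partition of `⋃₀ Q` obtained from `Q` by merging its two intersecting
blocks into `B_Q = {v̂_Q, v_Q^-, v_Q^+}`. -/
def QPart {α : Type*} [LinearOrder α] (Q : Set (Set α)) (vh vm vp : α) : Set (Set α) :=
  (Q \ {({vh, vm} : Set α), ({vh, vp} : Set α)}) ∪ {({vh, vm, vp} : Set α)}

/-!
Write `x ~ y` for `{x, y} ∈ Q`. Counting incidences, every vertex has exactly one partner
except `v̂_Q`, whose partners are `v_Q^-` and `v_Q^+`. A vertex `v ∉ M` is joined to all of `M`
in the same direction exactly when its partners in `M` are all the elements of `M` below `v`,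
or all those above `v`. Consequently an interval closed under `~` is a module, and `Q_part` is
irreducible iff no nontrivial interval is closed under `~`. A failure of (2), (3) or (4) makes
one of `{v_Q^-, v_Q^+}`, `{v, v+3}`, `{v, v+1}`, `V ∖ {1}`, `V ∖ {n-2}` a nontrivial module.

Conversely let `M` be a nontrivial module with extreme elements `a < b`. By (2), a module
containing `v_Q^-` and `v_Q^+` contains `v̂_Q`; hence no vertex outside `[a, b]` has a partner
in `M`, and a vertex of `(a, b) ∖ M` other than `v̂_Q` is paired with `a` or with `b`. If `v̂_Q` is not such a gap, `[a, b]` is closed under `~`, so by (1) it is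
`V`, and then (2) and (4) force a contradiction near `1` and `n - 2`. If `v̂_Q` is a gap, one
of its partners lies outside `[a, b]`, at most one other gap exists, and (1), (3) or (4)
excludes each of the few remaining configurations.
-/

theorem Finset.eq_of_two_le_of_sum_eq_card_add_one {ι : Type*} [DecidableEq ι] {s : Finset ι}
    {f : ι → ℕ} (hf : ∀ i ∈ s, 1 ≤ f i) (hsum : ∑ i ∈ s, f i = s.card + 1) {i j : ι}
    (hi : i ∈ s) (hj : j ∈ s) (hfi : 2 ≤ f i) (hfj : 2 ≤ f j) : i = j := by
  by_contra hij
  have hj' : j ∈ s.erase i := Finset.mem_erase.2 ⟨Ne.symm hij, hj⟩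
  have hrest : ((s.erase i).erase j).card ≤ ∑ k ∈ (s.erase i).erase j, f k := by
    simpa using Finset.card_nsmul_le_sum _ f 1 fun k hk =>
      hf k (Finset.mem_of_mem_erase (Finset.mem_of_mem_erase hk))
  rw [← Finset.add_sum_erase s f hi, ← Finset.add_sum_erase _ f hj'] at hsum
  rw [Finset.card_erase_of_mem hj', Finset.card_erase_of_mem hi] at hrest
  have : 2 ≤ s.card := by
    have := Finset.card_le_card (Finset.insert_subset hi (Finset.singleton_subset_iff.2 hj))
    rwa [Finset.card_pair hij] at this
  omega

theorem Finset.lt_three_of_sum_eq_card_add_one {ι : Type*} [DecidableEq ι] {s : Finset ι}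
    {f : ι → ℕ} (hf : ∀ i ∈ s, 1 ≤ f i) (hsum : ∑ i ∈ s, f i = s.card + 1) {i : ι}
    (hi : i ∈ s) : f i < 3 := by
  have hrest : (s.erase i).card ≤ ∑ k ∈ s.erase i, f k := by
    simpa using Finset.card_nsmul_le_sum _ f 1 fun k hk => hf k (Finset.mem_of_mem_erase hk)
  rw [← Finset.add_sum_erase s f hi] at hsum
  rw [Finset.card_erase_of_mem hi] at hrest
  have := Finset.card_pos.2 ⟨i, hi⟩
  omega

open Classical in
theorem Finset.sum_card_filter_mem_eq_two_mul {α : Type*} {s : Finset α} {t : Finset (Set α)}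
    (ht : ∀ B ∈ t, B ⊆ s ∧ B.ncard = 2) : ∑ x ∈ s, (t.filter (x ∈ ·)).card = 2 * t.card := by
  have hB : ∀ B ∈ t, (s.filter (· ∈ B)).card = 2 := fun B hB => by
    rw [← Set.ncard_coe_finset, ← (ht B hB).2, Finset.coe_filter]
    congr 1
    ext x
    simpa using fun hx => (ht B hB).1 hx
  calc ∑ x ∈ s, (t.filter (x ∈ ·)).card = ∑ B ∈ t, (s.filter (· ∈ B)).card :=
        Finset.sum_card_bipartiteAbove_eq_sum_card_bipartiteBelow (· ∈ ·)
    _ = 2 * t.card := by rw [Finset.sum_congr rfl hB, Finset.sum_const, smul_eq_mul, mul_comm]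

theorem Set.pair_ne_pair {α : Type*} {x y z : α} (h : y ≠ z) : ({x, y} : Set α) ≠ {x, z} := by
  intro e
  rcases Set.pair_eq_pair_iff.1 e with ⟨-, e⟩ | ⟨rfl, rfl⟩
  exacts [h e, h rfl]

section CenteredPairing

variable {α : Type*}

theorem pair_mem_comm {Q : Set (Set α)} {x y : α} : ({x, y} : Set α) ∈ Q ↔ {y, x} ∈ Q := by
  rw [Set.pair_comm]

/-- The partner relation `{x, y} ∈ Q` of a quasi-pairing `Q` of `V` with `v̂_Q = vh`:
every vertex has a unique partner, except `vh`, whose partners are `vm` and `vp`. -/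
structure IsCenteredPairing (V : Set α) (Q : Set (Set α)) (vh vm vp : α) : Prop where
  exists_eq_pair {B : Set α} : B ∈ Q → ∃ x y, B = {x, y}
  mem_of_pair_mem {x y : α} : {x, y} ∈ Q → y ∈ V
  singleton_notMem (x : α) : {x} ∉ Q
  exists_pair_mem {x : α} : x ∈ V → ∃ y, {x, y} ∈ Q
  eq_of_pair_mem_of_pair_mem {x y z : α} : {x, y} ∈ Q → {x, z} ∈ Q → y ≠ z → x = vh
  pair_mem_iff {y : α} : {vh, y} ∈ Q ↔ y = vm ∨ y = vp
  vm_ne_vp : vm ≠ vp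

theorem IsPartialQuasiPairingOn.isCenteredPairing {V : Set α} {Q : Set (Set α)} {vh vm vp : α}
    (hQ : IsPartialQuasiPairingOn V Q) (hcover : ⋃₀ Q = V) (hm : {vh, vm} ∈ Q)
    (hp : {vh, vp} ∈ Q) (hmp : vm ≠ vp) : IsCenteredPairing V Q vh vm vp := by
  classical
  obtain ⟨hblock, m, -, hV, hQm⟩ := hQ
  rw [hcover] at hV
  have hVfin : V.Finite := Set.finite_of_ncard_pos (by omega)
  have hQfin : Q.Finite := Set.finite_of_ncard_pos (by omega)
  set s := hVfin.toFinset
  set t := hQfin.toFinset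
  set deg : α → ℕ := fun x => (t.filter (x ∈ ·)).card
  have hsum : ∑ x ∈ s, deg x = s.card + 1 := by
    rw [Finset.sum_card_filter_mem_eq_two_mul fun B hB => ?_,
      ← Set.ncard_eq_toFinset_card Q hQfin, ← Set.ncard_eq_toFinset_card V hVfin]
    · omega
    rw [Set.Finite.mem_toFinset] at hB
    exact ⟨by simpa [s] using (hblock B hB).1, (hblock B hB).2⟩
  have hdeg : ∀ x ∈ s, 1 ≤ deg x := fun x hx => by
    rw [Set.Finite.mem_toFinset, ← hcover] at hx
    obtain ⟨B, hB, hxB⟩ := hx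
    exact Finset.card_pos.2 ⟨B, by simp [t, hB, hxB]⟩
  have two_le_deg : ∀ {x y z : α}, {x, y} ∈ Q → {x, z} ∈ Q → y ≠ z → 2 ≤ deg x :=
    fun {x y z} hy hz hyz => Finset.one_lt_card.2
      ⟨{x, y}, by simp [t, hy], {x, z}, by simp [t, hz], Set.pair_ne_pair hyz⟩
  have mem_s : ∀ {x y : α}, {x, y} ∈ Q → x ∈ s := fun h => by
    simpa [s] using (hblock _ h).1 (Set.mem_insert _ _)
  refine
    { exists_eq_pair := fun hB => ?_
      mem_of_pair_mem := fun h => (hblock _ h).1 (by simp)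
      singleton_notMem := fun x hx => by simpa using (hblock _ hx).2
      exists_pair_mem := fun hx => ?_
      eq_of_pair_mem_of_pair_mem := fun hy hz hyz => ?_
      pair_mem_iff := fun {y} => ⟨fun hy => ?_, ?_⟩
      vm_ne_vp := hmp }
  · obtain ⟨x, y, -, rfl⟩ := Set.ncard_eq_two.1 (hblock _ hB).2
    exact ⟨x, y, rfl⟩
  · rw [← hcover] at hx
    obtain ⟨B, hB, hxB⟩ := hx
    obtain ⟨u, w, -, rfl⟩ := Set.ncard_eq_two.1 (hblock B hB).2
    rcases hxB with rfl | rfl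
    · exact ⟨w, hB⟩
    · exact ⟨u, pair_mem_comm.1 hB⟩
  · exact Finset.eq_of_two_le_of_sum_eq_card_add_one hdeg hsum (mem_s hy) (mem_s hm)
      (two_le_deg hy hz hyz) (two_le_deg hm hp hmp)
  · by_contra h
    rw [not_or] at h
    refine (Finset.lt_three_of_sum_eq_card_add_one hdeg hsum (mem_s hm)).not_ge
      (Finset.two_lt_card.2 ⟨{vh, vm}, by simp [t, hm], {vh, vp}, by simp [t, hp], {vh, y},
        by simp [t, hy], Set.pair_ne_pair hmp, Set.pair_ne_pair (Ne.symm h.1),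
        Set.pair_ne_pair (Ne.symm h.2)⟩)
  · rintro (rfl | rfl) <;> assumption

namespace IsCenteredPairing

variable {V : Set α} {Q : Set (Set α)} {vh vm vp x y z : α}

theorem ne_of_pair_mem (hQ : IsCenteredPairing V Q vh vm vp) (h : {x, y} ∈ Q) : x ≠ y := by
  rintro rfl
  exact hQ.singleton_notMem x (by simpa using h)

theorem mem_of_pair_mem' (hQ : IsCenteredPairing V Q vh vm vp) (h : {x, y} ∈ Q) : x ∈ V :=
  hQ.mem_of_pair_mem (pair_mem_comm.1 h)

theorem eq_of_pair_mem (hQ : IsCenteredPairing V Q vh vm vp) (hx : x ≠ vh) (hy : {x, y} ∈ Q)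
    (hz : {x, z} ∈ Q) : y = z :=
  by_contra fun hyz => hx (hQ.eq_of_pair_mem_of_pair_mem hy hz hyz)

theorem eq_of_pair_mem_center (hQ : IsCenteredPairing V Q vh vm vp) (hx : {vh, x} ∈ Q)
    (hy : {x, y} ∈ Q) : y = vh :=
  hQ.eq_of_pair_mem (hQ.ne_of_pair_mem hx).symm hy (pair_mem_comm.1 hx)

theorem eq_or_eq_of_pair_mem (hQ : IsCenteredPairing V Q vh vm vp) {y₁ y₂ y₃ : α}
    (h₁ : {x, y₁} ∈ Q) (h₂ : {x, y₂} ∈ Q) (h₃ : {x, y₃} ∈ Q) (h₁₂ : y₁ ≠ y₂) :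
    y₃ = y₁ ∨ y₃ = y₂ := by
  obtain rfl := hQ.eq_of_pair_mem_of_pair_mem h₁ h₂ h₁₂
  rcases hQ.pair_mem_iff.1 h₁ with rfl | rfl <;> rcases hQ.pair_mem_iff.1 h₂ with rfl | rfl <;>
    rcases hQ.pair_mem_iff.1 h₃ with rfl | rfl <;> simp_all

theorem exists_pair_mem_ne (hQ : IsCenteredPairing V Q vh vm vp) (hx : {vh, x} ∈ Q) :
    ∃ y, {vh, y} ∈ Q ∧ y ≠ x := by
  rcases hQ.pair_mem_iff.1 hx with rfl | rfl
  · exact ⟨vp, hQ.pair_mem_iff.2 (Or.inr rfl), hQ.vm_ne_vp.symm⟩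
  · exact ⟨vm, hQ.pair_mem_iff.2 (Or.inl rfl), hQ.vm_ne_vp⟩

end IsCenteredPairing

end CenteredPairing

section Modules

variable {α : Type*} [LinearOrder α] {P : Set (Set α)} {W M : Set α} {v x : α}

theorem invArc_iff_of_ne (h : x ≠ v) : InvArc P v x ↔ ({v, x} ∈ P ↔ x < v) := by
  rcases h.lt_or_gt with h | h <;> simp [InvArc, h, h.not_gt]

theorem IsModuleOn.pair_mem_iff_or (hM : IsModuleOn P W M) (hv : v ∈ W) (hvM : v ∉ M) :
    (∀ x ∈ M, {v, x} ∈ P ↔ x < v) ∨ (∀ x ∈ M, {v, x} ∈ P ↔ v < x) := by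
  have hne : ∀ x ∈ M, x ≠ v := fun x hx h => hvM (h ▸ hx)
  refine (hM.2 v hv hvM).imp (fun h x hx => ?_) (fun h x hx => ?_)
  · exact (invArc_iff_of_ne (hne x hx)).1 (h x hx)
  · rw [pair_mem_comm]
    exact (invArc_iff_of_ne (hne x hx).symm).1 (h x hx)

theorem isModuleOn_of_pair_mem_iff (hMW : M ⊆ W)
    (h : ∀ v ∈ W, v ∉ M → (∀ x ∈ M, {v, x} ∈ P ↔ x < v) ∨ (∀ x ∈ M, {v, x} ∈ P ↔ v < x)) :
    IsModuleOn P W M := by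
  refine ⟨hMW, fun v hv hvM => (h v hv hvM).imp (fun h x hx => ?_) (fun h x hx => ?_)⟩
  · have hne : x ≠ v := fun e => hvM (e ▸ hx)
    exact (invArc_iff_of_ne hne).2 (h x hx)
  · have hne : v ≠ x := fun e => hvM (e ▸ hx)
    rw [invArc_iff_of_ne hne, pair_mem_comm]
    exact h x hx

def PairClosed (P : Set (Set α)) (S : Set α) : Prop :=
  ∀ x ∈ S, ∀ y, {x, y} ∈ P → y ∈ S

theorem isModuleOn_of_pairClosed {S : Set α} (hS : PairClosed P S) (hI : IsIntervalOf W S) :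
    IsModuleOn P W S := by
  refine ⟨hI.1, fun v hv hvS => (hI.2 v ⟨hv, hvS⟩).imp (fun h x hx => ?_) (fun h x hx => ?_)⟩
  · exact Or.inl ⟨h x hx, fun hp => hvS (hS x hx v (pair_mem_comm.1 hp))⟩
  · exact Or.inl ⟨h x hx, fun hp => hvS (hS x hx v hp)⟩

def PairIrreducibleOn (X : Set α) (P : Set (Set α)) : Prop :=
  ∀ S, PairClosed P S → IsIntervalOf X S → IsTrivialSubset X S

namespace IsCenteredPairing

variable {V : Set α} {Q : Set (Set α)} {vh vm vp : α}

theorem pairClosed_of_mem_qPart (hQ : IsCenteredPairing V Q vh vm vp) {B : Set α}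
    (hB : B ∈ QPart Q vh vm vp) : PairClosed Q B := by
  rcases hB with ⟨hBQ, hBc⟩ | rfl
  · obtain ⟨x, y, rfl⟩ := hQ.exists_eq_pair hBQ
    have hxy : ∀ {x y}, ({x, y} : Set α) ∈ Q → {x, y} ∉ ({{vh, vm}, {vh, vp}} : Set (Set α)) →
        x ≠ vh := by
      rintro x y hxy hc rfl
      rcases hQ.pair_mem_iff.1 hxy with rfl | rfl <;> simp at hc
    have hx := hxy hBQ hBc
    have hy := hxy (pair_mem_comm.1 hBQ) (by rwa [Set.pair_comm y x])
    rintro z (rfl | rfl) w hw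
    · exact Or.inr (hQ.eq_of_pair_mem hx hw hBQ)
    · exact Or.inl (hQ.eq_of_pair_mem hy hw (pair_mem_comm.1 hBQ))
  · have hm : {vh, vm} ∈ Q := hQ.pair_mem_iff.2 (Or.inl rfl)
    have hp : {vh, vp} ∈ Q := hQ.pair_mem_iff.2 (Or.inr rfl)
    rintro z (rfl | rfl | rfl) w hw
    · rcases hQ.pair_mem_iff.1 hw with rfl | rfl <;> simp
    · exact Or.inl (hQ.eq_of_pair_mem_center hm hw)
    · exact Or.inl (hQ.eq_of_pair_mem_center hp hw)

theorem exists_mem_qPart (hQ : IsCenteredPairing V Q vh vm vp) {S : Set α} (hS : PairClosed Q S)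
    {x : α} (hxS : x ∈ S) (hxV : x ∈ V) : ∃ B ∈ QPart Q vh vm vp, x ∈ B ∧ B ⊆ S := by
  have hm : {vh, vm} ∈ Q := hQ.pair_mem_iff.2 (Or.inl rfl)
  have hp : {vh, vp} ∈ Q := hQ.pair_mem_iff.2 (Or.inr rfl)
  by_cases hx : x = vh ∨ x = vm ∨ x = vp
  · refine ⟨{vh, vm, vp}, Or.inr rfl, by simpa using hx, ?_⟩
    have hvh : vh ∈ S := by
      rcases hx with rfl | rfl | rfl
      · exact hxS
      · exact hS _ hxS _ (pair_mem_comm.1 hm)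
      · exact hS _ hxS _ (pair_mem_comm.1 hp)
    rintro z (rfl | rfl | rfl)
    exacts [hvh, hS _ hvh _ hm, hS _ hvh _ hp]
  · simp only [not_or] at hx
    obtain ⟨y, hy⟩ := hQ.exists_pair_mem hxV
    refine ⟨{x, y}, Or.inl ⟨hy, ?_⟩, Or.inl rfl, ?_⟩
    · rintro (h | h) <;> simp [Set.pair_eq_pair_iff, hx] at h
    · rintro z (rfl | rfl)
      exacts [hxS, hS _ hxS _ hy]

theorem irreducibleOn_qPart_iff (hQ : IsCenteredPairing V Q vh vm vp) :
    IrreducibleOn V (QPart Q vh vm vp) ↔ PairIrreducibleOn V Q := by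
  constructor
  · intro h S hS hI
    by_contra hnt
    refine h {B | B ∈ QPart Q vh vm vp ∧ B ⊆ S} (fun B hB => hB.1) ?_
    have hU : ⋃₀ {B | B ∈ QPart Q vh vm vp ∧ B ⊆ S} = S := by
      refine Set.Subset.antisymm (Set.sUnion_subset fun B hB => hB.2) fun x hx => ?_
      obtain ⟨B, hB, hxB, hBS⟩ := hQ.exists_mem_qPart hS hx (hI.1 hx)
      exact ⟨B, ⟨hB, hBS⟩, hxB⟩
    rw [hU]
    exact ⟨hI, hnt⟩
  · intro h R hR hI
    refine hI.2 (h _ (fun x hx y hxy => ?_) hI.1)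
    obtain ⟨B, hB, hxB⟩ := hx
    exact ⟨B, hB, hQ.pairClosed_of_mem_qPart (hR hB) x hxB y hxy⟩

end IsCenteredPairing

end Modules

section Nat

variable {n : ℕ} {Q : Set (Set ℕ)} {vh vm vp : ℕ} {M : Set ℕ} {a b : ℕ}

theorem not_isTrivialSubset_pair (hn : 3 ≤ n) {c d : ℕ} (hcd : c ≠ d) (hc : c < n)
    (hd : d < n) : ¬IsTrivialSubset (Iio n) {c, d} := by
  rintro (h | ⟨e, h⟩ | h)
  · exact (Set.insert_nonempty c {d}).ne_empty h
  · have hc' : c ∈ ({e} : Set ℕ) := h ▸ Or.inl rfl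
    have hd' : d ∈ ({e} : Set ℕ) := h ▸ Or.inr rfl
    simp_all
  · obtain ⟨k, hk, hkc, hkd⟩ : ∃ k < n, k ≠ c ∧ k ≠ d := by
      by_cases h0 : c ≠ 0 ∧ d ≠ 0
      · exact ⟨0, by omega, Ne.symm h0.1, Ne.symm h0.2⟩
      by_cases h1 : c ≠ 1 ∧ d ≠ 1
      · exact ⟨1, by omega, Ne.symm h1.1, Ne.symm h1.2⟩
      · exact ⟨2, by omega, by omega, by omega⟩
    have : k ∈ ({c, d} : Set ℕ) := by rw [h]; exact hk
    rcases this with rfl | rfl <;> contradiction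

theorem not_isTrivialSubset_diff_singleton (hn : 3 ≤ n) {c : ℕ} (hc : c < n) :
    ¬IsTrivialSubset (Iio n) (Iio n \ {c}) := by
  obtain ⟨d, e, hd, he, hdc, hec, hde⟩ : ∃ d e, d < n ∧ e < n ∧ d ≠ c ∧ e ≠ c ∧ d ≠ e := by
    by_cases h0 : c = 0
    · exact ⟨1, 2, by omega, by omega, by omega, by omega, by omega⟩
    by_cases h1 : c = 1
    · exact ⟨0, 2, by omega, by omega, by omega, by omega, by omega⟩
    · exact ⟨0, 1, by omega, by omega, by omega, by omega, by omega⟩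
  have hd' : d ∈ Iio n \ {c} := ⟨hd, hdc⟩
  have he' : e ∈ Iio n \ {c} := ⟨he, hec⟩
  rintro (h | ⟨x, h⟩ | h)
  · simp [h] at hd'
  · rw [h] at hd' he'
    exact hde (hd'.trans he'.symm)
  · have : c ∈ Iio n \ {c} := by rw [h]; exact hc
    exact this.2 rfl

theorem exists_bounds_of_not_isTrivialSubset (hM : M ⊆ Iio n)
    (h : ¬IsTrivialSubset (Iio n) M) : ∃ a ∈ M, ∃ b ∈ M, a < b ∧ M ⊆ Icc a b := by
  have hne : M.Nonempty := Set.nonempty_iff_ne_empty.2 fun h' => h (Or.inl h')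
  have hbdd : BddAbove M := ⟨n, fun x hx => (hM hx).le⟩
  refine ⟨sInf M, Nat.sInf_mem hne, sSup M, Nat.sSup_mem hne hbdd, ?_,
    fun x hx => ⟨Nat.sInf_le hx, le_csSup hbdd hx⟩⟩
  by_contra hle
  refine h (Or.inr (Or.inl ⟨sInf M, Set.Subset.antisymm (fun x hx => ?_) ?_⟩))
  · have := le_csSup hbdd hx
    exact le_antisymm (by omega) (Nat.sInf_le hx)
  · exact Set.singleton_subset_iff.2 (Nat.sInf_mem hne)

structure IsModuleBetween (Q : Set (Set ℕ)) (n : ℕ) (M : Set ℕ) (a b : ℕ) : Prop where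
  isModuleOn : IsModuleOn Q (Iio n) M
  left_mem : a ∈ M
  right_mem : b ∈ M
  subset_Icc : M ⊆ Icc a b
  lt : a < b

namespace IsCenteredPairing

theorem add_two_le {V : Set ℕ} (hQ : IsCenteredPairing V Q vh vm vp) (hC2 : vm + 2 ≤ vp)
    {x y z : ℕ} (hy : {x, y} ∈ Q) (hz : {x, z} ∈ Q) (hyz : y < z) : y + 2 ≤ z := by
  obtain rfl := hQ.eq_of_pair_mem_of_pair_mem hy hz hyz.ne
  rcases hQ.pair_mem_iff.1 hy with rfl | rfl <;> rcases hQ.pair_mem_iff.1 hz with rfl | rfl <;>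
    omega

theorem eq_zero_and_eq_of_pairClosed_Icc (hQ : IsCenteredPairing (Iio n) Q vh vm vp)
    (hirr : PairIrreducibleOn (Iio n) Q) {lo hi : ℕ} (hlohi : lo ≤ hi) (hhi : hi < n)
    (hS : PairClosed Q (Icc lo hi)) : lo = 0 ∧ hi = n - 1 := by
  have hI : IsIntervalOf (Iio n) (Icc lo hi) := by
    refine ⟨fun x hx => lt_of_le_of_lt hx.2 hhi, fun v hv => ?_⟩
    simp only [Set.mem_sdiff, Set.mem_Icc, not_and_or, not_le] at hv
    rcases hv.2 with h | h
    · exact Or.inl fun i hi => lt_of_lt_of_le h hi.1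
    · exact Or.inr fun i hi => lt_of_le_of_lt hi.2 h
  have hlo : lo ∈ Icc lo hi := ⟨le_rfl, hlohi⟩
  rcases hirr _ hS hI with h | ⟨x, h⟩ | h
  · exact absurd h (Set.nonempty_Icc.2 hlohi).ne_empty
  · obtain ⟨y, hy⟩ := hQ.exists_pair_mem (show lo < n by omega)
    have hyS := hS lo hlo y hy
    rw [h] at hlo hyS
    exact absurd (hlo.trans hyS.symm) (hQ.ne_of_pair_mem hy)
  · have h0 : 0 ∈ Icc lo hi := h ▸ (show 0 < n by omega)
    have h1 : n - 1 ∈ Icc lo hi := h ▸ (show n - 1 < n by omega)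
    exact ⟨by have := h0.1; omega, by have := h1.2; omega⟩

theorem isModuleOn_center_pair (hQ : IsCenteredPairing (Iio n) Q vh vm vp) (h : vp = vm + 1) :
    IsModuleOn Q (Iio n) {vm, vp} := by
  have hm : {vh, vm} ∈ Q := hQ.pair_mem_iff.2 (Or.inl rfl)
  have hp : {vh, vp} ∈ Q := hQ.pair_mem_iff.2 (Or.inr rfl)
  refine isModuleOn_of_pair_mem_iff ?_ fun v _ hvM => ?_
  · rintro x (rfl | rfl)
    exacts [hQ.mem_of_pair_mem hm, hQ.mem_of_pair_mem hp]
  simp only [Set.mem_insert_iff, Set.mem_singleton_iff, not_or] at hvM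
  simp only [Set.mem_insert_iff, Set.mem_singleton_iff, forall_eq_or_imp, forall_eq]
  by_cases hv : v = vh
  · subst hv
    simp only [hm, hp, true_iff]
    omega
  · have hvm : {v, vm} ∉ Q := fun h' => hv (hQ.eq_of_pair_mem_center hm (pair_mem_comm.1 h'))
    have hvp : {v, vp} ∉ Q := fun h' => hv (hQ.eq_of_pair_mem_center hp (pair_mem_comm.1 h'))
    simp only [hvm, hvp, false_iff, not_lt]
    omega

theorem isModuleOn_pair_add_three (hQ : IsCenteredPairing (Iio n) Q vh vm vp) {v : ℕ}
    (h₀ : {v, v + 2} ∈ Q) (h₁ : {v + 1, v + 3} ∈ Q) (hv₀ : vh ≠ v) (hv₃ : vh ≠ v + 3) :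
    IsModuleOn Q (Iio n) {v, v + 3} := by
  have hn := hQ.mem_of_pair_mem h₁
  refine isModuleOn_of_pair_mem_iff ?_ fun w _ hwM => ?_
  · rintro x (rfl | rfl) <;> simp only [Set.mem_Iio] at hn ⊢ <;> omega
  simp only [Set.mem_insert_iff, Set.mem_singleton_iff, not_or] at hwM
  simp only [Set.mem_insert_iff, Set.mem_singleton_iff, forall_eq_or_imp, forall_eq]
  have hw₀ : {w, v} ∈ Q ↔ w = v + 2 := ⟨fun h => hQ.eq_of_pair_mem (Ne.symm hv₀)
    (pair_mem_comm.1 h) h₀, fun h => h ▸ pair_mem_comm.1 h₀⟩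
  have hw₃ : {w, v + 3} ∈ Q ↔ w = v + 1 := ⟨fun h => hQ.eq_of_pair_mem (Ne.symm hv₃)
    (pair_mem_comm.1 h) (pair_mem_comm.1 h₁), fun h => h ▸ h₁⟩
  rw [hw₀, hw₃]
  omega

theorem isModuleOn_pair_succ (hQ : IsCenteredPairing (Iio n) Q vh vm vp) {v : ℕ}
    (h : {v, v + 1} ∈ Q) (hv₀ : vh ≠ v) (hv₁ : vh ≠ v + 1) :
    IsModuleOn Q (Iio n) {v, v + 1} := by
  have hn := hQ.mem_of_pair_mem h
  refine isModuleOn_of_pairClosed ?_ ⟨?_, fun w hw => ?_⟩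
  · rintro x (rfl | rfl) y hy
    · exact Or.inr (hQ.eq_of_pair_mem (Ne.symm hv₀) hy h)
    · exact Or.inl (hQ.eq_of_pair_mem (Ne.symm hv₁) hy (pair_mem_comm.1 h))
  · rintro x (rfl | rfl) <;> simp only [Set.mem_Iio] at hn ⊢ <;> omega
  · simp only [Set.mem_sdiff, Set.mem_insert_iff, Set.mem_singleton_iff, not_or] at hw
    simp only [Set.mem_insert_iff, Set.mem_singleton_iff, forall_eq_or_imp, forall_eq]
    omega

theorem isModuleOn_diff_one (hQ : IsCenteredPairing (Iio n) Q vh vm vp) (h : {0, 1} ∈ Q)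
    (hvh : vh ≠ 1) : IsModuleOn Q (Iio n) (Iio n \ {1}) := by
  refine isModuleOn_of_pair_mem_iff Set.sdiff_subset fun w hw hwM => Or.inl fun x hx => ?_
  obtain rfl : w = 1 := by simpa [hw] using hwM
  constructor
  · intro h'
    have := hQ.eq_of_pair_mem (Ne.symm hvh) h' (pair_mem_comm.1 h)
    omega
  · intro hx1
    obtain rfl : x = 0 := by omega
    exact pair_mem_comm.1 h

theorem isModuleOn_diff_sub_two (hQ : IsCenteredPairing (Iio n) Q vh vm vp)
    (h : {n - 2, n - 1} ∈ Q) (hvh : vh ≠ n - 2) :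
    IsModuleOn Q (Iio n) (Iio n \ {n - 2}) := by
  refine isModuleOn_of_pair_mem_iff Set.sdiff_subset fun w hw hwM => Or.inr fun x hx => ?_
  obtain rfl : w = n - 2 := by simpa [hw] using hwM
  have hx' : x < n ∧ x ≠ n - 2 := by simpa using hx
  constructor
  · intro h'
    have := hQ.eq_of_pair_mem (Ne.symm hvh) h' h
    omega
  · intro hx1
    obtain rfl : x = n - 1 := by omega
    exact h

theorem add_two_le_of_indecomposableOn (hQ : IsCenteredPairing (Iio n) Q vh vm vp) (hn : 3 ≤ n)
    (hmp : vm < vp) (hind : IndecomposableOn Q (Iio n)) : vm + 2 ≤ vp := by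
  by_contra h
  exact not_isTrivialSubset_pair hn hQ.vm_ne_vp
    (hQ.mem_of_pair_mem (hQ.pair_mem_iff.2 (Or.inl rfl)))
    (hQ.mem_of_pair_mem (hQ.pair_mem_iff.2 (Or.inr rfl)))
    (hind _ (hQ.isModuleOn_center_pair (by omega)))

theorem center_of_pair_mem_add_two (hQ : IsCenteredPairing (Iio n) Q vh vm vp) (hn : 3 ≤ n)
    (hind : IndecomposableOn Q (Iio n)) {v : ℕ} (h₀ : {v, v + 2} ∈ Q) (h₁ : {v + 1, v + 3} ∈ Q) :
    vh = v ∨ vh = v + 3 := by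
  by_contra h
  rw [not_or] at h
  have hv3 : v + 3 < n := hQ.mem_of_pair_mem h₁
  exact not_isTrivialSubset_pair hn (by omega) (by omega) hv3
    (hind _ (hQ.isModuleOn_pair_add_three h₀ h₁ h.1 h.2))

theorem center_of_pair_mem_succ (hQ : IsCenteredPairing (Iio n) Q vh vm vp) (hn : 3 ≤ n)
    (hind : IndecomposableOn Q (Iio n)) {v : ℕ} (h : {v, v + 1} ∈ Q) :
    (vh = v ∨ vh = v + 1) ∧ vh ≠ 0 ∧ vh ≠ n - 1 := by
  have hv1 : v + 1 < n := hQ.mem_of_pair_mem h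
  have hmem : vh = v ∨ vh = v + 1 := by
    by_contra h'
    rw [not_or] at h'
    exact not_isTrivialSubset_pair hn (by omega) (by omega) hv1
      (hind _ (hQ.isModuleOn_pair_succ h h'.1 h'.2))
  refine ⟨hmem, fun h0 => ?_, fun hlast => ?_⟩
  · obtain rfl : v = 0 := by omega
    exact not_isTrivialSubset_diff_singleton hn (by omega)
      (hind _ (hQ.isModuleOn_diff_one h (by omega)))
  · obtain rfl : v = n - 2 := by omega
    rw [show n - 2 + 1 = n - 1 by omega] at h
    exact not_isTrivialSubset_diff_singleton hn (by omega)
      (hind _ (hQ.isModuleOn_diff_sub_two h (by omega)))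

theorem pair_mem_left_or_right (hQ : IsCenteredPairing (Iio n) Q vh vm vp)
    (hM : IsModuleOn Q (Iio n) M) (ha : a ∈ M) (hb : b ∈ M) {w : ℕ} (haw : a < w) (hwb : w < b)
    (hwM : w ∉ M) (hw : w ≠ vh) :
    ({w, a} ∈ Q ∧ ∀ x ∈ M, a < x → w < x) ∨ ({w, b} ∈ Q ∧ ∀ x ∈ M, x < b → x < w) := by
  have hne : ∀ x ∈ M, x ≠ w := fun x hx h => hwM (h ▸ hx)
  refine (hM.pair_mem_iff_or (lt_trans hwb (hM.1 hb)) hwM).imp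
    (fun h => ⟨(h a ha).2 haw, fun x hx hax => ?_⟩) (fun h => ⟨(h b hb).2 hwb, fun x hx hxb => ?_⟩)
  · by_contra hxw
    have hxw' : x < w := lt_of_le_of_ne (not_lt.1 hxw) (hne x hx)
    exact hax.ne (hQ.eq_of_pair_mem hw ((h a ha).2 haw) ((h x hx).2 hxw'))
  · by_contra hxw
    have hwx : w < x := lt_of_le_of_ne (not_lt.1 hxw) (hne x hx).symm
    exact hxb.ne (hQ.eq_of_pair_mem hw ((h x hx).2 hwx) ((h b hb).2 hwb))

theorem center_mem_of_mem_of_mem (hQ : IsCenteredPairing (Iio n) Q vh vm vp) (hC2 : vm + 2 ≤ vp)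
    (hM : IsModuleOn Q (Iio n) M) (hm : vm ∈ M) (hp : vp ∈ M) : vh ∈ M := by
  by_contra hvhM
  have hvm : {vh, vm} ∈ Q := hQ.pair_mem_iff.2 (Or.inl rfl)
  have hvp : {vh, vp} ∈ Q := hQ.pair_mem_iff.2 (Or.inr rfl)
  -- `vm` and `vp` lie on the same side of `vh`, hence so does `vm + 1`
  have hside : (vp < vh ∧ ∀ x ∈ M, x < vh → {vh, x} ∈ Q) ∨
      (vh < vm ∧ ∀ x ∈ M, vh < x → {vh, x} ∈ Q) := by
    rcases hM.pair_mem_iff_or (hQ.mem_of_pair_mem' hvm) hvhM with h | h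
    · exact Or.inl ⟨(h vp hp).1 hvp, fun x hx => (h x hx).2⟩
    · exact Or.inr ⟨(h vm hm).1 hvm, fun x hx => (h x hx).2⟩
  have h1M : vm + 1 ∉ M := fun h1 => by
    have hv1 : {vh, vm + 1} ∈ Q := by
      rcases hside with ⟨hlt, hx⟩ | ⟨hlt, hx⟩
      exacts [hx _ h1 (by omega), hx _ h1 (by omega)]
    have := hQ.eq_or_eq_of_pair_mem hvm hvp hv1 hQ.vm_ne_vp
    omega
  have h1v : vm + 1 ≠ vh := by omega
  rcases hQ.pair_mem_left_or_right hM hm hp (by omega) (by omega) h1M h1v with ⟨h, -⟩ | ⟨h, -⟩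
  · exact h1v (hQ.eq_of_pair_mem_center hvm (pair_mem_comm.1 h))
  · exact h1v (hQ.eq_of_pair_mem_center hvp (pair_mem_comm.1 h))

theorem center_mem_of_pair_mem (hQ : IsCenteredPairing (Iio n) Q vh vm vp) (hC2 : vm + 2 ≤ vp)
    (hM : IsModuleOn Q (Iio n) M) {c d : ℕ} (hc : {vh, c} ∈ Q) (hd : {vh, d} ∈ Q) (hcd : c ≠ d)
    (hcM : c ∈ M) (hdM : d ∈ M) : vh ∈ M := by
  rcases hQ.pair_mem_iff.1 hc with rfl | rfl <;> rcases hQ.pair_mem_iff.1 hd with rfl | rfl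
  all_goals first
    | exact absurd rfl hcd
    | exact hQ.center_mem_of_mem_of_mem hC2 hM ‹_› ‹_›

theorem mem_Icc_of_pair_mem (hQ : IsCenteredPairing (Iio n) Q vh vm vp) (hC2 : vm + 2 ≤ vp)
    (hK : IsModuleBetween Q n M a b) {x y : ℕ} (hx : x ∈ M) (hxy : {x, y} ∈ Q) :
    y ∈ Icc a b := by
  by_contra hy
  have hyM : y ∉ M := fun h => hy (hK.subset_Icc h)
  -- all of `M` lies on one side of `y`, so `y` is paired with all of `M`
  have hall : ∀ z ∈ M, {y, z} ∈ Q := by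
    have hxI := hK.subset_Icc hx
    rcases hK.isModuleOn.pair_mem_iff_or (hQ.mem_of_pair_mem hxy) hyM with h | h <;>
    · have := (h x hx).1 (pair_mem_comm.1 hxy)
      refine fun z hz => (h z hz).2 ?_
      have := hK.subset_Icc hz
      simp only [Set.mem_Icc, not_and_or, not_le] at hy hxI this
      omega
  obtain rfl := hQ.eq_of_pair_mem_of_pair_mem (hall a hK.left_mem) (hall b hK.right_mem) hK.lt.ne
  exact hyM (hQ.center_mem_of_pair_mem hC2 hK.isModuleOn (hall a hK.left_mem)
    (hall b hK.right_mem) hK.lt.ne hK.left_mem hK.right_mem)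

theorem pairClosed_Icc (hQ : IsCenteredPairing (Iio n) Q vh vm vp) (hC2 : vm + 2 ≤ vp)
    (hK : IsModuleBetween Q n M a b) (hvh : vh ∈ M ∨ vh ∉ Ioo a b) :
    PairClosed Q (Icc a b) := by
  intro x hx y hxy
  by_cases hxM : x ∈ M
  · exact hQ.mem_Icc_of_pair_mem hC2 hK hxM hxy
  have hax : a < x := lt_of_le_of_ne hx.1 fun e => hxM (e ▸ hK.left_mem)
  have hxb : x < b := lt_of_le_of_ne hx.2 fun e => hxM (e ▸ hK.right_mem)
  have hxv : x ≠ vh := by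
    rintro rfl
    exact hvh.elim hxM fun h => h ⟨hax, hxb⟩
  rcases hQ.pair_mem_left_or_right hK.isModuleOn hK.left_mem hK.right_mem hax hxb hxM hxv with
    ⟨h, -⟩ | ⟨h, -⟩
  · rw [hQ.eq_of_pair_mem hxv hxy h]
    exact ⟨le_rfl, hK.lt.le⟩
  · rw [hQ.eq_of_pair_mem hxv hxy h]
    exact ⟨hK.lt.le, le_rfl⟩

theorem mem_of_pair_mem_center (hQ : IsCenteredPairing (Iio n) Q vh vm vp)
    (hK : IsModuleBetween Q n M a b) (hvhM : vh ∉ M) {c : ℕ} (hc : {vh, c} ∈ Q)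
    (hcI : c ∈ Icc a b) : c ∈ M := by
  by_contra hcM
  have hcv : c ≠ vh := (hQ.ne_of_pair_mem hc).symm
  have hac : a < c := lt_of_le_of_ne hcI.1 fun e => hcM (e ▸ hK.left_mem)
  have hcb : c < b := lt_of_le_of_ne hcI.2 fun e => hcM (e ▸ hK.right_mem)
  rcases hQ.pair_mem_left_or_right hK.isModuleOn hK.left_mem hK.right_mem hac hcb hcM hcv with
    ⟨h, -⟩ | ⟨h, -⟩
  · exact hvhM (hQ.eq_of_pair_mem hcv (pair_mem_comm.1 hc) h ▸ hK.left_mem)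
  · exact hvhM (hQ.eq_of_pair_mem hcv (pair_mem_comm.1 hc) h ▸ hK.right_mem)

theorem exists_pair_mem_center_notMem_Icc (hQ : IsCenteredPairing (Iio n) Q vh vm vp)
    (hC2 : vm + 2 ≤ vp) (hK : IsModuleBetween Q n M a b) (hvhM : vh ∉ M) {d : ℕ}
    (hd : {vh, d} ∈ Q) (hdM : d ∈ M) : ∃ c, {vh, c} ∈ Q ∧ c ≠ d ∧ c ∉ Icc a b := by
  obtain ⟨c, hc, hcd⟩ := hQ.exists_pair_mem_ne hd
  refine ⟨c, hc, hcd, fun hcI => hvhM ?_⟩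
  exact hQ.center_mem_of_pair_mem hC2 hK.isModuleOn hc hd hcd
    (hQ.mem_of_pair_mem_center hK hvhM hc hcI) hdM

theorem pair_mem_zero_or_last (hQ : IsCenteredPairing (Iio n) Q vh vm vp)
    (hM : IsModuleOn Q (Iio n) M) (h0 : 0 ∈ M) (hlast : n - 1 ∈ M) (hvh : vh ∈ M) {w : ℕ}
    (hw : w < n) (hwM : w ∉ M) :
    ({w, 0} ∈ Q ∧ ∀ x ∈ M, 0 < x → w < x) ∨ ({w, n - 1} ∈ Q ∧ ∀ x ∈ M, x < n - 1 → x < w) :=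
  hQ.pair_mem_left_or_right hM h0 hlast (Nat.pos_of_ne_zero fun e => hwM (e ▸ h0))
    (lt_of_le_of_ne (by omega) fun e => hwM (e ▸ hlast)) hwM fun e => hwM (e ▸ hvh)

theorem pair_mem_one_last_of_notMem (hQ : IsCenteredPairing (Iio n) Q vh vm vp) (hn : 3 ≤ n)
    (hC4 : ∀ v < n, {v, v + 1} ∈ Q → (vh = v ∨ vh = v + 1) ∧ vh ≠ 0 ∧ vh ≠ n - 1)
    (hM : IsModuleOn Q (Iio n) M) (h0 : 0 ∈ M) (hlast : n - 1 ∈ M) (hvh : vh ∈ M)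
    (h1 : 1 ∉ M) : {1, n - 1} ∈ Q ∧ M ⊆ {0, n - 1} := by
  rcases hQ.pair_mem_zero_or_last hM h0 hlast hvh (by omega) h1 with ⟨h, -⟩ | ⟨h, hbelow⟩
  · obtain ⟨h01, h0', -⟩ := hC4 0 (by omega) (pair_mem_comm.1 h)
    have hv1 : vh = 1 := h01.resolve_left h0'
    exact absurd (hv1 ▸ hvh) h1
  · refine ⟨h, fun x hx => ?_⟩
    have := hbelow x hx
    have : x < n := hM.1 hx
    simp only [Set.mem_insert_iff, Set.mem_singleton_iff]
    omega

theorem pair_mem_sub_two_zero_of_notMem (hQ : IsCenteredPairing (Iio n) Q vh vm vp)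
    (hn : 3 ≤ n)
    (hC4 : ∀ v < n, {v, v + 1} ∈ Q → (vh = v ∨ vh = v + 1) ∧ vh ≠ 0 ∧ vh ≠ n - 1)
    (hM : IsModuleOn Q (Iio n) M) (h0 : 0 ∈ M) (hlast : n - 1 ∈ M) (hvh : vh ∈ M)
    (h2 : n - 2 ∉ M) : {n - 2, 0} ∈ Q ∧ M ⊆ {0, n - 1} := by
  rcases hQ.pair_mem_zero_or_last hM h0 hlast hvh (by omega) h2 with ⟨h, habove⟩ | ⟨h, -⟩
  · refine ⟨h, fun x hx => ?_⟩
    have := habove x hx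
    have : x < n := hM.1 hx
    simp only [Set.mem_insert_iff, Set.mem_singleton_iff]
    omega
  · rw [show n - 1 = n - 2 + 1 by omega] at h
    obtain ⟨h01, -, h0'⟩ := hC4 (n - 2) (by omega) h
    have hv2 : vh = n - 2 := h01.resolve_right (by omega)
    exact absurd (hv2 ▸ hvh) h2

theorem false_of_center_mem (hQ : IsCenteredPairing (Iio n) Q vh vm vp) (hn : 5 ≤ n)
    (hC2 : vm + 2 ≤ vp)
    (hC4 : ∀ v < n, {v, v + 1} ∈ Q → (vh = v ∨ vh = v + 1) ∧ vh ≠ 0 ∧ vh ≠ n - 1)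
    (hM : IsModuleOn Q (Iio n) M) (h0 : 0 ∈ M) (hlast : n - 1 ∈ M) (hvh : vh ∈ M) {z : ℕ}
    (hz : z < n) (hzM : z ∉ M) : False := by
  have hsub : M ⊆ {0, n - 1} := by
    rcases hQ.pair_mem_zero_or_last hM h0 hlast hvh hz hzM with ⟨-, h⟩ | ⟨-, h⟩
    · refine (hQ.pair_mem_one_last_of_notMem (by omega) hC4 hM h0 hlast hvh fun h1 => ?_).2
      have := h 1 h1 one_pos
      exact hzM (show z = 0 by omega ▸ h0)
    · refine (hQ.pair_mem_sub_two_zero_of_notMem (by omega) hC4 hM h0 hlast hvh fun h2 => ?_).2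
      have := h (n - 2) h2 (by omega)
      exact hzM (show z = n - 1 by omega ▸ hlast)
  have hgap : ∀ w, 0 < w → w < n - 1 → w ∉ M := fun w h h' hw => by
    have := hsub hw
    simp only [Set.mem_insert_iff, Set.mem_singleton_iff] at this
    omega
  have h1 := (hQ.pair_mem_one_last_of_notMem (by omega) hC4 hM h0 hlast hvh
    (hgap 1 (by omega) (by omega))).1
  have h2 := (hQ.pair_mem_sub_two_zero_of_notMem (by omega) hC4 hM h0 hlast hvh
    (hgap (n - 2) (by omega) (by omega))).1
  rcases hQ.pair_mem_zero_or_last hM h0 hlast hvh (by omega) (hgap 2 (by omega) (by omega)) with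
    ⟨h20, -⟩ | ⟨h2n, -⟩
  · -- `0 = vh` is paired with `2` and `n - 2`, which leaves no partner for `3`
    have h0vh := hQ.eq_of_pair_mem_of_pair_mem (pair_mem_comm.1 h20) (pair_mem_comm.1 h2)
      (by omega)
    rcases hQ.pair_mem_zero_or_last hM h0 hlast hvh (by omega) (hgap 3 (by omega) (by omega)) with
      ⟨h30, -⟩ | ⟨h3n, -⟩
    · have := hQ.add_two_le hC2 (pair_mem_comm.1 h20) (pair_mem_comm.1 h30) (by norm_num)
      omega
    · have := hQ.eq_of_pair_mem_of_pair_mem (pair_mem_comm.1 h1) (pair_mem_comm.1 h3n) (by omega)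
      omega
  · have := hQ.add_two_le hC2 (pair_mem_comm.1 h1) (pair_mem_comm.1 h2n) (by norm_num)
    omega

theorem false_of_center_gap_lower_of_gap (hQ : IsCenteredPairing (Iio n) Q vh vm vp)
    (hC3 : ∀ v < n, {v, v + 2} ∈ Q → {v + 1, v + 3} ∈ Q → vh = v ∨ vh = v + 3)
    (hC4 : ∀ v < n, {v, v + 1} ∈ Q → (vh = v ∨ vh = v + 1) ∧ vh ≠ 0 ∧ vh ≠ n - 1)
    (hK : IsModuleBetween Q n M a b) (hvh : vh ∈ Ioo a b) (hva : {vh, a} ∈ Q)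
    (hlow : ∀ x ∈ M, x < vh → x = a)
    (hgap : ∀ w, a < w → w < b → w ∉ M → w ≠ vh → {w, b} ∈ Q ∧ ∀ x ∈ M, x < b → x < w)
    {w : ℕ} (haw : a < w) (hwb : w < b) (hwM : w ∉ M) (hwv : w ≠ vh) : False := by
  obtain ⟨hav, hvb⟩ := hvh
  have hbn : b < n := hK.isModuleOn.1 hK.right_mem
  obtain ⟨hwb', hbelow⟩ := hgap w haw hwb hwM hwv
  -- `b` has a single partner, so `w` is the only gap besides `vh`
  have hmem : ∀ t, a < t → t < b → t ≠ vh → t ≠ w → t ∈ M := fun t hat htb htv htw =>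
    by_contra fun htM => htw (hQ.eq_of_pair_mem hvb.ne' (pair_mem_comm.1 (hgap t hat htb htM htv).1)
      (pair_mem_comm.1 hwb'))
  rcases hwv.lt_or_gt with hwv | hwv
  · have hin : ∀ t, a < t → t < b → t ≠ vh → t = w := fun t hat htb htv => by_contra fun htw => by
      have htM := hmem t hat htb htv htw
      rcases htv.lt_or_gt with h | h
      · exact hat.ne' (hlow t htM h)
      · have := hbelow t htM htb
        omega
    have e1 : w = a + 1 := (hin (a + 1) (by omega) (by omega) (by omega)).symm
    have e2 : vh = a + 2 := by
      by_contra e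
      have := hin (a + 2) (by omega) (by omega) (by omega)
      omega
    have e3 : b = a + 3 := by
      by_contra e
      have := hin (a + 3) (by omega) (by omega) (by omega)
      omega
    rw [e2] at hva
    rw [e1, e3] at hwb'
    have := hC3 a (by omega) (pair_mem_comm.1 hva) hwb'
    omega
  · have e : b = w + 1 := by_contra fun e => by
      have := hbelow (w + 1) (hmem (w + 1) (by omega) (by omega) (by omega) (by omega)) (by omega)
      omega
    rw [e] at hwb'
    have := (hC4 w (by omega) hwb').1
    omega

theorem false_of_center_gap_lower_of_forall (hQ : IsCenteredPairing (Iio n) Q vh vm vp)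
    (hirr : PairIrreducibleOn (Iio n) Q) (hC2 : vm + 2 ≤ vp) (hK : IsModuleBetween Q n M a b)
    (hvh : vh ∈ Ioo a b) (hva : {vh, a} ∈ Q) (hlow : ∀ x ∈ M, x < vh → x = a)
    (hL : ∀ x ∈ M, {vh, x} ∈ Q ↔ x < vh) (hgap : ∀ w, a < w → w < b → w ∉ M → w = vh) :
    False := by
  obtain ⟨hav, hvb⟩ := hvh
  have hmem : ∀ t, a < t → t < b → t ≠ vh → t ∈ M := fun t hat htb htv =>
    by_contra fun htM => htv (hgap t hat htb htM)
  have e : vh = a + 1 := by_contra fun e => by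
    have := hlow (a + 1) (hmem (a + 1) (by omega) (by omega) (Ne.symm e)) (by omega)
    omega
  have hcl : PairClosed Q (Icc (a + 2) b) := by
    rintro x ⟨hx1, hx2⟩ y hxy
    have hxM : x ∈ M := by
      rcases hx2.lt_or_eq with h | h
      exacts [hmem x (by omega) h (by omega), h ▸ hK.right_mem]
    obtain ⟨hy1, hy2⟩ := hQ.mem_Icc_of_pair_mem hC2 hK hxM hxy
    have hya : y ≠ a := fun h => by
      have := hQ.eq_of_pair_mem_center hva (pair_mem_comm.1 (h ▸ hxy))
      omega
    have hyv : y ≠ vh := fun h => by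
      have := (hL x hxM).1 (pair_mem_comm.1 (h ▸ hxy))
      omega
    exact ⟨by omega, hy2⟩
  have := hQ.eq_zero_and_eq_of_pairClosed_Icc hirr (by omega) (hK.isModuleOn.1 hK.right_mem) hcl
  omega

theorem false_of_center_gap_lower (hQ : IsCenteredPairing (Iio n) Q vh vm vp)
    (hirr : PairIrreducibleOn (Iio n) Q) (hC2 : vm + 2 ≤ vp)
    (hC3 : ∀ v < n, {v, v + 2} ∈ Q → {v + 1, v + 3} ∈ Q → vh = v ∨ vh = v + 3)
    (hC4 : ∀ v < n, {v, v + 1} ∈ Q → (vh = v ∨ vh = v + 1) ∧ vh ≠ 0 ∧ vh ≠ n - 1)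
    (hK : IsModuleBetween Q n M a b) (hvh : vh ∈ Ioo a b) (hvhM : vh ∉ M)
    (hL : ∀ x ∈ M, {vh, x} ∈ Q ↔ x < vh) : False := by
  have hva : {vh, a} ∈ Q := (hL a hK.left_mem).2 hvh.1
  obtain ⟨c, hvc, hca, hcI⟩ := hQ.exists_pair_mem_center_notMem_Icc hC2 hK hvhM hva hK.left_mem
  have hlow : ∀ x ∈ M, x < vh → x = a := fun x hx hxv =>
    ((hQ.eq_or_eq_of_pair_mem hva hvc ((hL x hx).2 hxv) hca.symm).resolve_right
      fun e => hcI (e ▸ hK.subset_Icc hx))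
  have hgap : ∀ w, a < w → w < b → w ∉ M → w ≠ vh → {w, b} ∈ Q ∧ ∀ x ∈ M, x < b → x < w :=
    fun w haw hwb hwM hwv => (hQ.pair_mem_left_or_right hK.isModuleOn hK.left_mem hK.right_mem
      haw hwb hwM hwv).resolve_left
        fun h => hwv (hQ.eq_of_pair_mem_center hva (pair_mem_comm.1 h.1))
  by_cases hex : ∃ w, a < w ∧ w < b ∧ w ∉ M ∧ w ≠ vh
  · obtain ⟨w, haw, hwb, hwM, hwv⟩ := hex
    exact hQ.false_of_center_gap_lower_of_gap hC3 hC4 hK hvh hva hlow hgap haw hwb hwM hwv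
  · push Not at hex
    exact hQ.false_of_center_gap_lower_of_forall hirr hC2 hK hvh hva hlow hL hex

theorem false_of_center_gap_upper_of_gap (hQ : IsCenteredPairing (Iio n) Q vh vm vp)
    (hC3 : ∀ v < n, {v, v + 2} ∈ Q → {v + 1, v + 3} ∈ Q → vh = v ∨ vh = v + 3)
    (hC4 : ∀ v < n, {v, v + 1} ∈ Q → (vh = v ∨ vh = v + 1) ∧ vh ≠ 0 ∧ vh ≠ n - 1)
    (hK : IsModuleBetween Q n M a b) (hvh : vh ∈ Ioo a b) (hvb : {vh, b} ∈ Q)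
    (hhigh : ∀ x ∈ M, vh < x → x = b)
    (hgap : ∀ w, a < w → w < b → w ∉ M → w ≠ vh → {w, a} ∈ Q ∧ ∀ x ∈ M, a < x → w < x)
    {w : ℕ} (haw : a < w) (hwb : w < b) (hwM : w ∉ M) (hwv : w ≠ vh) : False := by
  obtain ⟨hav, hvb'⟩ := hvh
  have hbn : b < n := hK.isModuleOn.1 hK.right_mem
  obtain ⟨hwa, habove⟩ := hgap w haw hwb hwM hwv
  -- `a` has a single partner, so `w` is the only gap besides `vh`
  have hmem : ∀ t, a < t → t < b → t ≠ vh → t ≠ w → t ∈ M := fun t hat htb htv htw =>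
    by_contra fun htM => htw (hQ.eq_of_pair_mem hav.ne (pair_mem_comm.1 (hgap t hat htb htM htv).1)
      (pair_mem_comm.1 hwa))
  rcases hwv.lt_or_gt with hwv | hwv
  · have e : w = a + 1 := by_contra fun e => by
      have := habove (w - 1) (hmem (w - 1) (by omega) (by omega) (by omega) (by omega)) (by omega)
      omega
    rw [e] at hwa
    have := (hC4 a (by omega) (pair_mem_comm.1 hwa)).1
    omega
  · have hin : ∀ t, a < t → t < b → t ≠ vh → t = w := fun t hat htb htv => by_contra fun htw => by
      have htM := hmem t hat htb htv htw
      rcases htv.lt_or_gt with h | h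
      · have := habove t htM hat
        omega
      · exact htb.ne (hhigh t htM h)
    have e1 : vh = a + 1 := by
      by_contra e
      have := hin (a + 1) (by omega) (by omega) (Ne.symm e)
      omega
    have e2 : w = a + 2 := (hin (a + 2) (by omega) (by omega) (by omega)).symm
    have e3 : b = a + 3 := by
      by_contra e
      have := hin (a + 3) (by omega) (by omega) (by omega)
      omega
    rw [e2] at hwa
    rw [e1, e3] at hvb
    have := hC3 a (by omega) (pair_mem_comm.1 hwa) hvb
    omega

theorem false_of_center_gap_upper_of_forall (hQ : IsCenteredPairing (Iio n) Q vh vm vp)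
    (hirr : PairIrreducibleOn (Iio n) Q) (hC2 : vm + 2 ≤ vp) (hK : IsModuleBetween Q n M a b)
    (hvh : vh ∈ Ioo a b) (hvb : {vh, b} ∈ Q) (hhigh : ∀ x ∈ M, vh < x → x = b)
    (hR : ∀ x ∈ M, {vh, x} ∈ Q ↔ vh < x) (hgap : ∀ w, a < w → w < b → w ∉ M → w = vh) :
    False := by
  obtain ⟨hav, hvb'⟩ := hvh
  have hbn : b < n := hK.isModuleOn.1 hK.right_mem
  have hmem : ∀ t, a < t → t < b → t ≠ vh → t ∈ M := fun t hat htb htv =>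
    by_contra fun htM => htv (hgap t hat htb htM)
  have e : b = vh + 1 := by_contra fun e => by
    have := hhigh (vh + 1) (hmem (vh + 1) (by omega) (by omega) (by omega)) (by omega)
    omega
  have hcl : PairClosed Q (Icc a (b - 2)) := by
    rintro x ⟨hx1, hx2⟩ y hxy
    have hxM : x ∈ M := by
      rcases hx1.lt_or_eq with h | h
      exacts [hmem x h (by omega) (by omega), h ▸ hK.left_mem]
    obtain ⟨hy1, hy2⟩ := hQ.mem_Icc_of_pair_mem hC2 hK hxM hxy
    have hyb : y ≠ b := fun h => by
      have := hQ.eq_of_pair_mem_center hvb (pair_mem_comm.1 (h ▸ hxy))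
      omega
    have hyv : y ≠ vh := fun h => by
      have := (hR x hxM).1 (pair_mem_comm.1 (h ▸ hxy))
      omega
    exact ⟨hy1, by omega⟩
  have := hQ.eq_zero_and_eq_of_pairClosed_Icc hirr (by omega) (by omega) hcl
  omega

theorem false_of_center_gap_upper (hQ : IsCenteredPairing (Iio n) Q vh vm vp)
    (hirr : PairIrreducibleOn (Iio n) Q) (hC2 : vm + 2 ≤ vp)
    (hC3 : ∀ v < n, {v, v + 2} ∈ Q → {v + 1, v + 3} ∈ Q → vh = v ∨ vh = v + 3)
    (hC4 : ∀ v < n, {v, v + 1} ∈ Q → (vh = v ∨ vh = v + 1) ∧ vh ≠ 0 ∧ vh ≠ n - 1)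
    (hK : IsModuleBetween Q n M a b) (hvh : vh ∈ Ioo a b) (hvhM : vh ∉ M)
    (hR : ∀ x ∈ M, {vh, x} ∈ Q ↔ vh < x) : False := by
  have hvb : {vh, b} ∈ Q := (hR b hK.right_mem).2 hvh.2
  obtain ⟨c, hvc, hcb, hcI⟩ := hQ.exists_pair_mem_center_notMem_Icc hC2 hK hvhM hvb hK.right_mem
  have hhigh : ∀ x ∈ M, vh < x → x = b := fun x hx hvx =>
    ((hQ.eq_or_eq_of_pair_mem hvb hvc ((hR x hx).2 hvx) hcb.symm).resolve_right
      fun e => hcI (e ▸ hK.subset_Icc hx))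
  have hgap : ∀ w, a < w → w < b → w ∉ M → w ≠ vh → {w, a} ∈ Q ∧ ∀ x ∈ M, a < x → w < x :=
    fun w haw hwb hwM hwv => (hQ.pair_mem_left_or_right hK.isModuleOn hK.left_mem hK.right_mem
      haw hwb hwM hwv).resolve_right
        fun h => hwv (hQ.eq_of_pair_mem_center hvb (pair_mem_comm.1 h.1))
  by_cases hex : ∃ w, a < w ∧ w < b ∧ w ∉ M ∧ w ≠ vh
  · obtain ⟨w, haw, hwb, hwM, hwv⟩ := hex
    exact hQ.false_of_center_gap_upper_of_gap hC3 hC4 hK hvh hvb hhigh hgap haw hwb hwM hwv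
  · push Not at hex
    exact hQ.false_of_center_gap_upper_of_forall hirr hC2 hK hvh hvb hhigh hR hex

theorem indecomposableOn (hQ : IsCenteredPairing (Iio n) Q vh vm vp) (hn : 5 ≤ n)
    (hirr : PairIrreducibleOn (Iio n) Q) (hC2 : vm + 2 ≤ vp)
    (hC3 : ∀ v < n, {v, v + 2} ∈ Q → {v + 1, v + 3} ∈ Q → vh = v ∨ vh = v + 3)
    (hC4 : ∀ v < n, {v, v + 1} ∈ Q → (vh = v ∨ vh = v + 1) ∧ vh ≠ 0 ∧ vh ≠ n - 1) :
    IndecomposableOn Q (Iio n) := by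
  intro M hM
  by_contra hnt
  obtain ⟨a, ha, b, hb, hab, hMab⟩ := exists_bounds_of_not_isTrivialSubset hM.1 hnt
  have hK : IsModuleBetween Q n M a b := ⟨hM, ha, hb, hMab, hab⟩
  by_cases hgap : vh ∈ Ioo a b ∧ vh ∉ M
  · rcases hM.pair_mem_iff_or (lt_trans hgap.1.2 (hM.1 hb)) hgap.2 with h | h
    · exact hQ.false_of_center_gap_lower hirr hC2 hC3 hC4 hK hgap.1 hgap.2 h
    · exact hQ.false_of_center_gap_upper hirr hC2 hC3 hC4 hK hgap.1 hgap.2 h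
  · rw [not_and_or, not_not, or_comm] at hgap
    obtain ⟨rfl, rfl⟩ := hQ.eq_zero_and_eq_of_pairClosed_Icc hirr hab.le (hM.1 hb)
      (hQ.pairClosed_Icc hC2 hK hgap)
    obtain ⟨z, hz, hzM⟩ : ∃ z < n, z ∉ M := by
      by_contra! h
      exact hnt (Or.inr (Or.inr (Set.Subset.antisymm hM.1 h)))
    have hvh : vh ∈ M := by
      refine hgap.elim id fun h => ?_
      have hvn : vh < n := hQ.mem_of_pair_mem' (hQ.pair_mem_iff.2 (Or.inl rfl))
      simp only [Set.mem_Ioo, not_and_or, not_lt] at h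
      rcases (by omega : vh = 0 ∨ vh = n - 1) with e | e <;> rw [e] <;> assumption
    exact hQ.false_of_center_mem hn hC2 hC4 hM ha hb hvh hz hzM

end IsCenteredPairing

end Nat

theorem stmt_5_general (n : ℕ) (hn : 5 ≤ n) (Q : Set (Set ℕ))
    (hQ : IsPartialQuasiPairingOn (Set.Iio n) Q) (hcover : ⋃₀ Q = Set.Iio n)
    (vh vm vp : ℕ) (hdata : QPData Q vh vm vp) :
    IndecomposableOn Q (Set.Iio n) ↔
      (IrreducibleOn (Set.Iio n) (QPart Q vh vm vp) ∧
        vm + 2 ≤ vp ∧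
        (∀ v < n, ({v, v + 2} : Set ℕ) ∈ Q → ({v + 1, v + 3} : Set ℕ) ∈ Q →
          (vh = v ∨ vh = v + 3)) ∧
        (∀ v < n, ({v, v + 1} : Set ℕ) ∈ Q →
          (vh = v ∨ vh = v + 1) ∧ vh ≠ 0 ∧ vh ≠ n - 1)) := by
  obtain ⟨hm, hp, hmp⟩ := hdata
  have hP := hQ.isCenteredPairing hcover hm hp hmp.ne
  rw [hP.irreducibleOn_qPart_iff]
  constructor
  · intro hind
    exact ⟨fun S hS hI => hind S (isModuleOn_of_pairClosed hS hI),
      hP.add_two_le_of_indecomposableOn (by omega) hmp hind,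
      fun v _ => hP.center_of_pair_mem_add_two (by omega) hind,
      fun v _ => hP.center_of_pair_mem_succ (by omega) hind⟩
  · rintro ⟨hirr, hC2, hC3, hC4⟩
    exact hP.indecomposableOn hn hirr hC2 hC3 hC4

/-- Corollary 3. Let `n ≥ 5` be odd, `V = {0, …, n−1}`, `Q` a
quasi-pairing of `V` (so `⋃₀ Q = V`) with distinguished data `(vh, vm, vp)`, and
`T := Inv(underline(n), Q)`. Then `T` is indecomposable iff: (1) `Q` is irreducible;
(2) `v_Q^+ ≥ v_Q^- + 2`; (3) if `{v, v+2} ∈ Q` and `{v+1, v+3} ∈ Q`, then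
`v̂_Q ∈ {v, v+3}`; (4) if `{v, v+1} ∈ Q`, then `v̂_Q ∈ {v, v+1} ∖ {0, n−1}`. -/
theorem stmt_5 (n : ℕ) (hn : 5 ≤ n) (hodd : Odd n) (Q : Set (Set ℕ))
    (hQ : IsPartialQuasiPairingOn (Set.Iio n) Q) (hcover : ⋃₀ Q = Set.Iio n)
    (vh vm vp : ℕ) (hdata : QPData Q vh vm vp) :
    IndecomposableOn Q (Set.Iio n) ↔
      (IrreducibleOn (Set.Iio n) (QPart Q vh vm vp) ∧
        vm + 2 ≤ vp ∧
        (∀ v < n, ({v, v + 2} : Set ℕ) ∈ Q → ({v + 1, v + 3} : Set ℕ) ∈ Q →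
          (vh = v ∨ vh = v + 3)) ∧
        (∀ v < n, ({v, v + 1} : Set ℕ) ∈ Q →
          (vh = v ∨ vh = v + 1) ∧ vh ≠ 0 ∧ vh ≠ n - 1)) :=
  stmt_5_general n hn Q hQ hcover vh vm vp hdata
end

section
/- For every integer n ≥ 3, the family of minimal co-modules of the transitive tournament underline(n) is mc(underline(n)) = {{0}, {n−1}} ∪ {{i, i+1} : 1 ≤ i ≤ n−3}. -/
open Set

lemma invArc_empty {x y : ℕ} : InvArc (∅ : Set (Set ℕ)) x y ↔ x < y := by
  simp [InvArc]

lemma nontriv_of {W M : Set ℕ} {x y z : ℕ} (hx : x ∈ M) (hy : y ∈ M) (hxy : x ≠ y)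
    (hz : z ∈ W) (hzm : z ∉ M) : ¬ IsTrivialSubset W M := by
  rintro (h | ⟨a, h⟩ | h)
  · rw [h] at hx; exact hx
  · rw [h] at hx hy; exact hxy (hx.trans hy.symm)
  · exact hzm (h.symm ▸ hz)

lemma exists_two {W M : Set ℕ} (h : ¬ IsTrivialSubset W M) :
    ∃ a ∈ M, ∃ b ∈ M, a < b := by
  by_contra hc
  push_neg at hc
  apply h
  rcases M.eq_empty_or_nonempty with he | ⟨a, haM⟩
  · exact Or.inl he
  · refine Or.inr (Or.inl ⟨a, ?_⟩)
    ext x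
    simp only [Set.mem_singleton_iff]
    constructor
    · intro hx
      have h1 := hc x hx a haM
      have h2 := hc a haM x hx
      omega
    · rintro rfl; exact haM

lemma step_lemma {n : ℕ} {M : Set ℕ} (hM : IsModuleOn (∅ : Set (Set ℕ)) (Set.Iio n) M)
    {a b : ℕ} (ha : a ∈ M) (hb : b ∈ M) (hab : a < b) : a + 1 ∈ M := by
  by_contra h
  have hbn : b < n := hM.1 hb
  have han : a + 1 ∈ Set.Iio n := by simp only [Set.mem_Iio]; omega
  rcases hM.2 (a + 1) han h with h1 | h1
  · have := (invArc_empty).mp (h1 a ha); omega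
  · have := (invArc_empty).mp (h1 b hb); omega

lemma key {n : ℕ} (hn : 3 ≤ n) {M : Set ℕ}
    (hM : IsCoModuleOn (∅ : Set (Set ℕ)) (Set.Iio n) M) :
    (0 ∈ M) ∨ (n - 1 ∈ M) ∨ ∃ i, 1 ≤ i ∧ i ≤ n - 3 ∧ i ∈ M ∧ i + 1 ∈ M := by
  obtain ⟨hsub, hmod | hmod⟩ := hM
  · obtain ⟨hm, hnt⟩ := hmod
    obtain ⟨a, ha, b, hb, hab⟩ := exists_two hnt
    have ha1 : a + 1 ∈ M := step_lemma hm ha hb hab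
    have ha1n : a + 1 < n := hm.1 ha1
    rcases Nat.eq_zero_or_pos a with rfl | hapos
    · exact Or.inl ha
    · by_cases hle : a ≤ n - 3
      · exact Or.inr (Or.inr ⟨a, hapos, hle, ha, ha1⟩)
      · have : a + 1 = n - 1 := by omega
        exact Or.inr (Or.inl (this ▸ ha1))
  · by_contra hc
    push_neg at hc
    obtain ⟨h0, h1, _⟩ := hc
    have hMne : M.Nonempty := by
      by_contra h'
      apply hmod.2
      rw [Set.not_nonempty_iff_eq_empty.mp h', Set.diff_empty]
      exact Or.inr (Or.inr rfl)
    obtain ⟨m, hm⟩ := hMne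
    have hmn : m < n := hsub hm
    have h0d : (0 : ℕ) ∈ Set.Iio n \ M := ⟨by simp; omega, h0⟩
    have h1d : n - 1 ∈ Set.Iio n \ M := ⟨by simp; omega, h1⟩
    have hmnd : m ∉ Set.Iio n \ M := fun h => h.2 hm
    rcases hmod.1.2 m (by simpa using hmn) hmnd with h2 | h2
    · have := (invArc_empty).mp (h2 0 h0d); omega
    · have := (invArc_empty).mp (h2 (n - 1) h1d); omega

lemma comod_zero {n : ℕ} (hn : 3 ≤ n) :
    IsCoModuleOn (∅ : Set (Set ℕ)) (Set.Iio n) {0} := by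
  refine ⟨by simp only [Set.singleton_subset_iff, Set.mem_Iio]; omega,
    Or.inr ⟨⟨Set.diff_subset, ?_⟩, ?_⟩⟩
  · intro v hv hvn
    have hv0 : v = 0 := by
      by_contra h
      exact hvn ⟨hv, by simp [h]⟩
    subst hv0
    left
    intro x hx
    rw [invArc_empty]
    have : x ≠ 0 := by simpa using hx.2
    omega
  · refine nontriv_of (x := 1) (y := 2) (z := 0) ?_ ?_ (by simp) (by simp; omega) ?_
    · exact ⟨by simp; omega, by simp⟩
    · exact ⟨by simp; omega, by simp⟩
    · simp

lemma comod_last {n : ℕ} (hn : 3 ≤ n) :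
    IsCoModuleOn (∅ : Set (Set ℕ)) (Set.Iio n) {n - 1} := by
  refine ⟨by simp only [Set.singleton_subset_iff, Set.mem_Iio]; omega,
    Or.inr ⟨⟨Set.diff_subset, ?_⟩, ?_⟩⟩
  · intro v hv hvn
    have hvlt : v < n := by simpa using hv
    have hv0 : v = n - 1 := by
      by_contra h
      exact hvn ⟨hv, by simp [h]⟩
    subst hv0
    right
    intro x hx
    rw [invArc_empty]
    have hx1 : x < n := hx.1
    have : x ≠ n - 1 := by simpa using hx.2
    omega
  · refine nontriv_of (x := 0) (y := 1) (z := n - 1) ?_ ?_ (by omega)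
      (by simp; omega) ?_
    · exact ⟨by simp; omega, by simp; omega⟩
    · exact ⟨by simp; omega, by simp; omega⟩
    · simp

lemma comod_pair {n : ℕ} (hn : 3 ≤ n) {i : ℕ} (hi1 : 1 ≤ i) (hi2 : i ≤ n - 3) :
    IsCoModuleOn (∅ : Set (Set ℕ)) (Set.Iio n) {i, i + 1} := by
  have hiIn : ({i, i + 1} : Set ℕ) ⊆ Set.Iio n := by
    intro x hx
    simp only [Set.mem_insert_iff, Set.mem_singleton_iff] at hx
    simp only [Set.mem_Iio]
    omega
  refine ⟨hiIn, Or.inl ⟨⟨hiIn, ?_⟩, ?_⟩⟩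
  · intro v hv hvn
    simp only [Set.mem_insert_iff, Set.mem_singleton_iff, not_or] at hvn
    obtain ⟨hv1, hv2⟩ := hvn
    rcases lt_or_gt_of_ne hv1 with h | h
    · left
      intro x hx
      rw [invArc_empty]
      simp only [Set.mem_insert_iff, Set.mem_singleton_iff] at hx
      omega
    · right
      intro x hx
      rw [invArc_empty]
      simp only [Set.mem_insert_iff, Set.mem_singleton_iff] at hx
      omega
  · refine nontriv_of (x := i) (y := i + 1) (z := 0) (by simp) (by simp) (by omega)
      (by simp; omega) ?_
    simp only [Set.mem_insert_iff, Set.mem_singleton_iff, not_or]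
    omega

/-- equation (1) of the paper. For every `n ≥ 3`,
`mc(underline(n)) = {{0}, {n−1}} ∪ {{i, i+1} : 1 ≤ i ≤ n−3}`. -/
theorem stmt_7 (n : ℕ) (hn : 3 ≤ n) :
    mcOn (Set.Iio n) =
      {({0} : Set ℕ), ({n - 1} : Set ℕ)} ∪
        {B : Set ℕ | ∃ i : ℕ, 1 ≤ i ∧ i ≤ n - 3 ∧ B = {i, i + 1}} := by
  ext M
  simp only [mcOn, Set.mem_setOf_eq, Set.mem_union, Set.mem_insert_iff,
    Set.mem_singleton_iff]
  constructor
  · rintro ⟨hco, hmin⟩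
    rcases key hn hco with h0 | h1 | ⟨i, hi1, hi2, hiM, hi1M⟩
    · exact Or.inl (Or.inl (hmin {0} (comod_zero hn)
        (Set.singleton_subset_iff.mpr h0)).symm)
    · exact Or.inl (Or.inr (hmin {n - 1} (comod_last hn)
        (Set.singleton_subset_iff.mpr h1)).symm)
    · refine Or.inr ⟨i, hi1, hi2, ?_⟩
      refine (hmin {i, i + 1} (comod_pair hn hi1 hi2) ?_).symm
      intro x hx
      simp only [Set.mem_insert_iff, Set.mem_singleton_iff] at hx
      rcases hx with rfl | rfl
      · exact hiM
      · exact hi1M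
  · rintro ((rfl | rfl) | ⟨i, hi1, hi2, rfl⟩)
    · refine ⟨comod_zero hn, fun C hC hCsub => ?_⟩
      rcases key hn hC with h0 | h1 | ⟨i, hi1, hi2, hiM, hi1M⟩
      · exact Set.Subset.antisymm hCsub (Set.singleton_subset_iff.mpr h0)
      · have := hCsub h1
        simp only [Set.mem_singleton_iff] at this
        omega
      · have := hCsub hiM
        simp only [Set.mem_singleton_iff] at this
        omega
    · refine ⟨comod_last hn, fun C hC hCsub => ?_⟩
      rcases key hn hC with h0 | h1 | ⟨i, hi1, hi2, hiM, hi1M⟩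
      · have := hCsub h0
        simp only [Set.mem_singleton_iff] at this
        omega
      · exact Set.Subset.antisymm hCsub (Set.singleton_subset_iff.mpr h1)
      · have hA := hCsub hiM
        have hB := hCsub hi1M
        simp only [Set.mem_singleton_iff] at hA hB
        omega
    · refine ⟨comod_pair hn hi1 hi2, fun C hC hCsub => ?_⟩
      rcases key hn hC with h0 | h1 | ⟨j, hj1, hj2, hjM, hj1M⟩
      · have := hCsub h0
        simp only [Set.mem_insert_iff, Set.mem_singleton_iff] at this
        omega
      · have := hCsub h1
        simp only [Set.mem_insert_iff, Set.mem_singleton_iff] at this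
        omega
      · have hA := hCsub hjM
        have hB := hCsub hj1M
        simp only [Set.mem_insert_iff, Set.mem_singleton_iff] at hA hB
        have hji : j = i := by omega
        subst hji
        refine Set.Subset.antisymm hCsub ?_
        intro x hx
        simp only [Set.mem_insert_iff, Set.mem_singleton_iff] at hx
        rcases hx with rfl | rfl
        · exact hjM
        · exact hj1M
end
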